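/- arXiv:2310.19169 — 2 statements merged into one kernel-verified Lean document; each statement's English description precedes it below -/
import Mathlib

section
/- Let G be a triangle-free finite simple graph on n vertices with at least one edge. Then θ(G) ≥ n^{2/3}/16 (and hence the fractional chromatic number of the complement Ḡ is at least n^{2/3}/16). -/
open scoped Classical

noncomputable def lovaszTheta {V : Type*} [Fintype V] (G : SimpleGraph V) : ℝ :=
  sSup { x : ℝ | ∃ B : Matrix V V ℝ, B.PosSemidef ∧ B.trace = 1 ∧
    (∀ i j, G.Adj i j → B i j = 0) ∧ x = ∑ i, ∑ j, B i j }

/-! For `β ≥ 0` the matrix `M = β J + (A - (β / 2) I)²` built from the adjacency matrix `A` is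
positive semidefinite, and at an edge `ij` its entry is `β + (A²)ᵢⱼ - β = 0`, because adjacent
vertices of a triangle-free graph have no common neighbour. Normalising by the trace gives
`θ ≥ (β n² + ∑ (dᵢ - β / 2)²) / (β n + β² n / 4 + ∑ dᵢ)`. With `r = n^{1/3}`: if `∑ dᵢ ≥ r⁵ / 8`,
take `β = 0` and use `(∑ dᵢ)² ≤ n ∑ dᵢ²`; otherwise take `β = r`. -/

open Finset Matrix

section

variable {V : Type*} [Fintype V]

namespace Matrix.PosSemidef

variable {B : Matrix V V ℝ}

lemma two_mul_apply_le (hB : B.PosSemidef) (i j : V) : 2 * B i j ≤ B i i + B j j := by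
  have h := hB.dotProduct_mulVec_nonneg (Pi.single i 1 - Pi.single j 1)
  have hsymm : B j i = B i j := hB.isHermitian.apply i j
  simp only [star_trivial, mulVec_sub, dotProduct_sub, sub_dotProduct, mulVec_single_one,
    single_one_dotProduct, col_apply] at h
  linarith

lemma sum_sum_nonneg (hB : B.PosSemidef) : 0 ≤ ∑ i, ∑ j, B i j := by
  simpa [dotProduct, mulVec, Finset.mul_sum] using hB.dotProduct_mulVec_nonneg 1

lemma sum_sum_le_card_mul_trace (hB : B.PosSemidef) :
    ∑ i, ∑ j, B i j ≤ Fintype.card V * B.trace := by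
  have h : ∑ i, ∑ j, 2 * B i j ≤ ∑ i : V, ∑ j : V, (B i i + B j j) :=
    sum_le_sum fun i _ => sum_le_sum fun j _ => hB.two_mul_apply_le i j
  simp only [← mul_sum, sum_add_distrib, sum_const, card_univ, nsmul_eq_mul] at h
  simp only [trace, diag_apply]
  linarith

end Matrix.PosSemidef

section LovaszTheta

variable (G : SimpleGraph V)

lemma bddAbove_lovaszTheta_set : BddAbove { x : ℝ | ∃ B : Matrix V V ℝ, B.PosSemidef ∧
    B.trace = 1 ∧ (∀ i j, G.Adj i j → B i j = 0) ∧ x = ∑ i, ∑ j, B i j } := by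
  refine ⟨Fintype.card V, ?_⟩
  rintro x ⟨B, hB, htr, -, rfl⟩
  simpa [htr] using hB.sum_sum_le_card_mul_trace

lemma lovaszTheta_nonneg : 0 ≤ lovaszTheta G :=
  Real.sSup_nonneg fun _ ⟨_, hB, _, _, hx⟩ => hx ▸ hB.sum_sum_nonneg

/-- When the trace vanishes, the left-hand side is the junk value `0`. -/
lemma sum_sum_div_trace_le_lovaszTheta {M : Matrix V V ℝ} (hM : M.PosSemidef)
    (hMG : ∀ i j, G.Adj i j → M i j = 0) : (∑ i, ∑ j, M i j) / M.trace ≤ lovaszTheta G := by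
  obtain htr | htr := hM.trace_nonneg.eq_or_lt
  · rw [← htr, div_zero]
    exact lovaszTheta_nonneg G
  refine le_csSup (bddAbove_lovaszTheta_set G) ⟨M.trace⁻¹ • M, hM.smul (inv_nonneg.2 htr.le),
    ?_, fun i j h => by simp [hMG i j h], ?_⟩
  · rw [trace_smul, smul_eq_mul, inv_mul_cancel₀ htr.ne']
  · simp only [Matrix.smul_apply, smul_eq_mul, ← mul_sum, div_eq_inv_mul]

end LovaszTheta

lemma Matrix.sum_sum_transpose_mul_self {R : Type*} [CommSemiring R] (C : Matrix V V R) :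
    ∑ i, ∑ j, (Cᵀ * C) i j = ∑ k, (∑ j, C k j) ^ 2 := by
  simp only [mul_apply, transpose_apply, sq, sum_mul_sum]
  exact (sum_congr rfl fun _ _ => sum_comm).trans sum_comm

namespace SimpleGraph

variable (G : SimpleGraph V) [DecidableRel G.Adj]

lemma adjMatrix_mul_self_apply_eq_zero_of_adj {α : Type*} [NonAssocSemiring α]
    (hG : G.CliqueFree 3) {i j : V} (h : G.Adj i j) : (G.adjMatrix α * G.adjMatrix α) i j = 0 := by
  rw [adjMatrix_mul_apply]
  refine sum_eq_zero fun u hu => ?_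
  rw [mem_neighborFinset] at hu
  rw [adjMatrix_apply, if_neg fun huj => hG _ (is3Clique_triple_iff.2 ⟨h, hu, huj.symm⟩)]

lemma sum_adjMatrix_apply {α : Type*} [NonAssocSemiring α] (i : V) :
    ∑ j, G.adjMatrix α i j = G.degree i := by
  simp [adjMatrix_apply, sum_boole, ← card_neighborFinset_eq_degree, neighborFinset_eq_filter]

variable [DecidableEq V]

noncomputable def thetaWitness (β : ℝ) : Matrix V V ℝ :=
  β • of (fun _ _ => 1) + (G.adjMatrix ℝ - (β / 2) • 1)ᵀ * (G.adjMatrix ℝ - (β / 2) • 1)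

lemma thetaWitness_eq (β : ℝ) : G.thetaWitness β = β • of (fun _ _ => 1) +
    (G.adjMatrix ℝ * G.adjMatrix ℝ - β • G.adjMatrix ℝ + (β ^ 2 / 4) • 1) := by
  rw [thetaWitness, transpose_sub, transpose_adjMatrix, transpose_smul, transpose_one]
  simp only [sub_mul, mul_sub, Matrix.smul_mul, Matrix.mul_smul, mul_one, one_mul, smul_smul]
  module

lemma posSemidef_thetaWitness {β : ℝ} (hβ : 0 ≤ β) : (G.thetaWitness β).PosSemidef := by
  refine .add ?_ ?_
  · simpa [vecMulVec] using (posSemidef_vecMulVec_self_star (fun _ : V => (1 : ℝ))).smul hβ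
  · rw [← conjTranspose_eq_transpose_of_trivial]
    exact posSemidef_conjTranspose_mul_self _

lemma thetaWitness_apply_of_adj (hG : G.CliqueFree 3) (β : ℝ) {i j : V} (h : G.Adj i j) :
    G.thetaWitness β i j = 0 := by
  simp [thetaWitness_eq, G.adjMatrix_mul_self_apply_eq_zero_of_adj hG h, h, h.ne]

lemma trace_thetaWitness (β : ℝ) : (G.thetaWitness β).trace =
    β * Fintype.card V + β ^ 2 / 4 * Fintype.card V + ∑ i, (G.degree i : ℝ) := by
  have hJ : trace (of fun _ _ => (1 : ℝ) : Matrix V V ℝ) = Fintype.card V := by simp [trace]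
  have hA2 : trace (G.adjMatrix ℝ * G.adjMatrix ℝ) = ∑ i, (G.degree i : ℝ) := by
    simp only [trace, diag_apply, adjMatrix_mul_self_apply_self]
  rw [thetaWitness_eq, trace_add, trace_add, trace_sub, trace_smul, trace_smul, trace_smul, hJ,
    hA2, trace_adjMatrix, trace_one]
  simp only [smul_eq_mul, mul_zero, sub_zero]
  ring

lemma sum_sum_thetaWitness (β : ℝ) : ∑ i, ∑ j, G.thetaWitness β i j =
    β * Fintype.card V ^ 2 + ∑ i, ((G.degree i : ℝ) - β / 2) ^ 2 := by
  simp only [thetaWitness, Matrix.add_apply, sum_add_distrib, sum_sum_transpose_mul_self,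
    Matrix.sub_apply, sum_sub_distrib, sum_adjMatrix_apply]
  simp only [Matrix.smul_apply, of_apply, smul_eq_mul, mul_one, sum_const, card_univ, nsmul_eq_mul,
    one_apply, mul_ite, mul_zero, sum_ite_eq, mem_univ, ↓reduceIte, sq, add_left_inj]
  ring

variable {G}

lemma le_lovaszTheta_of_cliqueFree (hG : G.CliqueFree 3) {β : ℝ} (hβ : 0 ≤ β) :
    (β * Fintype.card V ^ 2 + ∑ i, ((G.degree i : ℝ) - β / 2) ^ 2) /
      (β * Fintype.card V + β ^ 2 / 4 * Fintype.card V + ∑ i, (G.degree i : ℝ)) ≤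
      lovaszTheta G := by
  rw [← sum_sum_thetaWitness, ← trace_thetaWitness]
  exact sum_sum_div_trace_le_lovaszTheta G (G.posSemidef_thetaWitness hβ)
    fun _ _ => G.thetaWitness_apply_of_adj hG β

lemma sum_degree_sq_div_le_lovaszTheta (hG : G.CliqueFree 3) :
    (∑ i, (G.degree i : ℝ) ^ 2) / ∑ i, (G.degree i : ℝ) ≤ lovaszTheta G := by
  simpa using le_lovaszTheta_of_cliqueFree hG le_rfl

lemma mul_card_sq_div_le_lovaszTheta (hG : G.CliqueFree 3) {β : ℝ} (hβ : 0 ≤ β) :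
    β * Fintype.card V ^ 2 /
      (β * Fintype.card V + β ^ 2 / 4 * Fintype.card V + ∑ i, (G.degree i : ℝ)) ≤
      lovaszTheta G := by
  refine le_trans ?_ (le_lovaszTheta_of_cliqueFree hG hβ)
  gcongr
  exact le_add_of_nonneg_right (sum_nonneg fun _ _ => sq_nonneg _)

end SimpleGraph

end

theorem stmt17_general {V : Type*} [Fintype V] (G : SimpleGraph V) (n : ℕ)
    (hn : Fintype.card V = n) (htf : G.CliqueFree 3) :
    (n : ℝ) ^ ((2 : ℝ) / 3) / 16 ≤ lovaszTheta G := by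
  obtain rfl | hn0 := n.eq_zero_or_pos
  · simpa using lovaszTheta_nonneg G
  set r : ℝ := (n : ℝ) ^ ((1 : ℝ) / 3)
  have hr : 1 ≤ r := Real.one_le_rpow (by exact_mod_cast hn0) (by norm_num)
  have hr3 : (Fintype.card V : ℝ) = r ^ 3 := by
    rw [hn, ← Real.rpow_natCast, ← Real.rpow_mul (Nat.cast_nonneg n)]; norm_num
  have hr2 : (n : ℝ) ^ ((2 : ℝ) / 3) = r ^ 2 := by
    rw [← Real.rpow_natCast, ← Real.rpow_mul (Nat.cast_nonneg n)]; norm_num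
  rw [hr2]
  set m : ℝ := ∑ i, (G.degree i : ℝ)
  rcases le_total (r ^ 5 / 8) m with hdense | hsparse
  · refine le_trans ?_ (SimpleGraph.sum_degree_sq_div_le_lovaszTheta htf)
    have hcs : m ^ 2 ≤ r ^ 3 * ∑ i, (G.degree i : ℝ) ^ 2 := by
      simpa [hr3] using sq_sum_le_card_mul_sum_sq (s := univ) (f := fun i => (G.degree i : ℝ))
    have hm : 0 < m := lt_of_lt_of_le (by positivity) hdense
    rw [div_le_div_iff₀ (by norm_num) hm]
    refine le_of_mul_le_mul_left ?_ (by positivity : (0 : ℝ) < r ^ 3)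
    nlinarith
  · refine le_trans ?_ (SimpleGraph.mul_card_sq_div_le_lovaszTheta htf (by positivity : 0 ≤ r))
    rw [hr3, div_le_div_iff₀ (by norm_num) (by positivity)]
    have : r ^ 6 ≤ r ^ 7 := pow_le_pow_right₀ hr (by norm_num)
    nlinarith

theorem stmt17 {V : Type*} [Fintype V] (G : SimpleGraph V) (n : ℕ)
    (hn : Fintype.card V = n) (htf : G.CliqueFree 3) (hedge : ∃ u v, G.Adj u v) :
    (n : ℝ) ^ ((2 : ℝ) / 3) / 16 ≤ lovaszTheta G :=
  stmt17_general G n hn htf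
end

section
/- Let G be the finite simple graph whose vertices are the binary vectors in {0,1}^5, with two distinct vertices adjacent iff their Hamming distance is 1 or 2. Then θ'(G) ≤ 4 and α(G ⊠ G) ≥ 20; consequently Θ(G) ≥ √20 > θ'(G), i.e., the Schrijver θ-function of a graph is not in general an upper bound on its Shannon capacity. -/
open scoped Classical

noncomputable def schrijverTheta {V : Type*} [Fintype V] (G : SimpleGraph V) : ℝ :=
  sSup { x : ℝ | ∃ B : Matrix V V ℝ, B.PosSemidef ∧ B.trace = 1 ∧
    (∀ i j, G.Adj i j → B i j = 0) ∧ (∀ i j, 0 ≤ B i j) ∧ x = ∑ i, ∑ j, B i j }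

noncomputable def indepNum {V : Type*} [Fintype V] (G : SimpleGraph V) : ℕ :=
  sSup { n : ℕ | ∃ s : Finset V, (∀ i ∈ s, ∀ j ∈ s, i ≠ j → ¬ G.Adj i j) ∧ s.card = n }

def strongProd {α β : Type*} (G : SimpleGraph α) (H : SimpleGraph β) :
    SimpleGraph (α × β) where
  Adj x y := x ≠ y ∧ (x.1 = y.1 ∨ G.Adj x.1 y.1) ∧ (x.2 = y.2 ∨ H.Adj x.2 y.2)
  symm := by
    constructor
    rintro x y ⟨h0, h1, h2⟩
    exact ⟨h0.symm, h1.imp Eq.symm (fun h => h.symm), h2.imp Eq.symm (fun h => h.symm)⟩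
  loopless := by constructor; rintro x ⟨h0, -, -⟩; exact h0 rfl

def strongPow {α : Type*} (G : SimpleGraph α) (k : ℕ) : SimpleGraph (Fin k → α) where
  Adj x y := x ≠ y ∧ ∀ i, x i = y i ∨ G.Adj (x i) (y i)
  symm := by
    constructor
    rintro x y ⟨h0, h1⟩
    exact ⟨h0.symm, fun i => (h1 i).imp Eq.symm (fun h => h.symm)⟩
  loopless := by constructor; rintro x ⟨h0, -⟩; exact h0 rfl

noncomputable def shannonCapacity {α : Type*} [Fintype α] (G : SimpleGraph α) : ℝ :=
  ⨆ k : ℕ+, (indepNum (strongPow G (k : ℕ)) : ℝ) ^ ((1 : ℝ) / ((k : ℕ) : ℝ))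

/-- The graph on the binary vectors of length 5, two distinct vertices being adjacent
iff their Hamming distance is 1 or 2. -/
def hamGraph : SimpleGraph (Fin 5 → Bool) where
  Adj x y := hammingDist x y = 1 ∨ hammingDist x y = 2
  symm := by
    constructor
    intro x y h
    rwa [hammingDist_comm]
  loopless := by
    constructor
    intro x h
    simp [hammingDist_self] at h


/-!
The bound `θ'(G) ≤ 4` has a dual certificate. Send `x ∈ {0,1}⁵` to the vector of the signs
`(-1)^(x i)` of its coordinates, extended by its parity sign `∏ i, (-1)^(x i)`. If `x` and `y`
are at Hamming distance `d`, the Gram matrix `T` of these vectors has entry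
`T x y = 5 - 2d + (-1)^d`: this is `6` on the diagonal and at most `-2` for `d ≥ 3`, that is,
for distinct nonadjacent vertices. So every feasible `B` satisfies
`0 ≤ ∑ (T/2) ∘ B ≤ ∑ (4I - J) ∘ B = 4 - ∑ B`, where the first inequality is Schur's product
theorem and the second holds entrywise because `B ≥ 0` vanishes on edges.

For the capacity, an explicit 20-element independent set of `G ⊠ G` gives
`Θ(G) ≥ α(G ⊠ G)^(1/2) ≥ √20 > 4`.
-/

open Matrix

lemma indepNum_eq_simpleGraph_indepNum {V : Type*} [Fintype V] (G : SimpleGraph V) :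
    indepNum G = G.indepNum := by
  simp only [indepNum, SimpleGraph.indepNum, SimpleGraph.isNIndepSet_iff,
    SimpleGraph.isIndepSet_iff, Set.Pairwise, Finset.mem_coe]

lemma card_le_indepNum_of_isIndepSet {V : Type*} [Fintype V] {G : SimpleGraph V}
    {s : Finset V} (hs : G.IsIndepSet s) : s.card ≤ indepNum G :=
  indepNum_eq_simpleGraph_indepNum G ▸ hs.card_le_indepNum

lemma indepNum_le_card {V : Type*} [Fintype V] (G : SimpleGraph V) :
    indepNum G ≤ Fintype.card V := by
  obtain ⟨s, hs⟩ := G.exists_isNIndepSet_indepNum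
  rw [indepNum_eq_simpleGraph_indepNum, ← hs.card_eq]
  exact s.card_le_univ

lemma indepNum_le_of_embedding {V W : Type*} [Fintype V] [Fintype W] {G : SimpleGraph V}
    {H : SimpleGraph W} (f : G ↪g H) : indepNum G ≤ indepNum H := by
  obtain ⟨s, hs⟩ := G.exists_isNIndepSet_indepNum
  have hmap : H.IsIndepSet (s.map f.toEmbedding : Set W) := by
    rw [Finset.coe_map]
    rintro _ ⟨x, hx, rfl⟩ _ ⟨y, hy, rfl⟩ hne
    rw [RelEmbedding.coe_toEmbedding, f.map_adj_iff]
    exact hs.isIndepSet hx hy (ne_of_apply_ne _ hne)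
  rw [indepNum_eq_simpleGraph_indepNum G, ← hs.card_eq, ← Finset.card_map f.toEmbedding]
  exact card_le_indepNum_of_isIndepSet hmap

def strongProdIsoStrongPowTwo {α : Type*} (G : SimpleGraph α) :
    strongProd G G ≃g strongPow G 2 where
  toEquiv := (finTwoArrowEquiv α).symm
  map_rel_iff' {x y} := by
    simp only [strongPow, strongProd, ne_eq, EmbeddingLike.apply_eq_iff_eq, Fin.forall_fin_two]
    rfl

lemma indepNum_strongProd_le_strongPow_two {α : Type*} [Fintype α] (G : SimpleGraph α) :
    indepNum (strongProd G G) ≤ indepNum (strongPow G 2) :=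
  indepNum_le_of_embedding (strongProdIsoStrongPowTwo G).toEmbedding

lemma rpow_indepNum_strongPow_le_card {α : Type*} [Fintype α] (G : SimpleGraph α) (k : ℕ+) :
    (indepNum (strongPow G k) : ℝ) ^ ((1 : ℝ) / (k : ℕ)) ≤ Fintype.card α := by
  have hk : ((k : ℕ) : ℝ) ≠ 0 := by exact_mod_cast k.ne_zero
  have hle : (indepNum (strongPow G k) : ℝ) ≤ (Fintype.card α : ℝ) ^ (k : ℕ) := by
    exact_mod_cast (indepNum_le_card _).trans_eq (by simp)
  calc (indepNum (strongPow G k) : ℝ) ^ ((1 : ℝ) / (k : ℕ))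
      ≤ ((Fintype.card α : ℝ) ^ (k : ℕ)) ^ ((1 : ℝ) / (k : ℕ)) := by gcongr
    _ = Fintype.card α := by
      rw [← Real.rpow_natCast, ← Real.rpow_mul (by positivity), mul_one_div_cancel hk,
        Real.rpow_one]

lemma rpow_indepNum_strongPow_le_shannonCapacity {α : Type*} [Fintype α] (G : SimpleGraph α)
    (k : ℕ+) : (indepNum (strongPow G k) : ℝ) ^ ((1 : ℝ) / (k : ℕ)) ≤ shannonCapacity G :=
  le_ciSup (f := fun k : ℕ+ => (indepNum (strongPow G k) : ℝ) ^ ((1 : ℝ) / (k : ℕ)))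
    ⟨Fintype.card α, Set.forall_mem_range.2 (rpow_indepNum_strongPow_le_card G)⟩ k

lemma sqrt_indepNum_strongProd_le_shannonCapacity {α : Type*} [Fintype α] (G : SimpleGraph α) :
    √(indepNum (strongProd G G) : ℝ) ≤ shannonCapacity G := by
  calc √(indepNum (strongProd G G) : ℝ)
      ≤ (indepNum (strongPow G 2) : ℝ) ^ ((1 : ℝ) / 2) := by
        rw [Real.sqrt_eq_rpow]
        gcongr
        exact_mod_cast indepNum_strongProd_le_strongPow_two G
    _ ≤ shannonCapacity G := by
        exact_mod_cast rpow_indepNum_strongPow_le_shannonCapacity G 2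

lemma sum_sum_mul_nonneg_of_posSemidef {V : Type*} [Fintype V] {M B : Matrix V V ℝ}
    (hM : M.PosSemidef) (hB : B.PosSemidef) : 0 ≤ ∑ i, ∑ j, M i j * B i j := by
  have h := (hM.hadamard hB).dotProduct_mulVec_nonneg 1
  simpa [dotProduct, mulVec, Finset.mul_sum] using h

lemma sum_le_of_schrijver_certificate {V : Type*} [Fintype V] (G : SimpleGraph V)
    (M : Matrix V V ℝ) (t : ℝ) (hM : M.PosSemidef) (hdiag : ∀ i, M i i ≤ t - 1)
    (hoff : ∀ i j, i ≠ j → ¬ G.Adj i j → M i j ≤ -1) (B : Matrix V V ℝ) (hB : B.PosSemidef)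
    (htr : B.trace = 1) (hadj : ∀ i j, G.Adj i j → B i j = 0) (hnonneg : ∀ i j, 0 ≤ B i j) :
    ∑ i, ∑ j, B i j ≤ t := by
  have hentry : ∀ i j, (M i j + 1) * B i j ≤ (if i = j then t else 0) * B i j := by
    intro i j
    by_cases hij : i = j
    · subst hij
      simp only [if_true]
      exact mul_le_mul_of_nonneg_right (by linarith [hdiag i]) (hnonneg i i)
    by_cases hG : G.Adj i j
    · simp [hadj i j hG]
    · simp only [hij, if_false, zero_mul]
      exact mul_nonpos_of_nonpos_of_nonneg (by linarith [hoff i j hij hG]) (hnonneg i j)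
  have hdiagSum : ∑ i, ∑ j, (if i = j then t else 0) * B i j = t := by
    simp only [ite_mul, zero_mul, Finset.sum_ite_eq, Finset.mem_univ, if_true, ← Finset.mul_sum]
    change t * B.trace = t
    rw [htr, mul_one]
  have hsum := Finset.sum_le_sum fun i (_ : i ∈ Finset.univ) =>
    Finset.sum_le_sum fun j (_ : j ∈ Finset.univ) => hentry i j
  simp only [add_mul, one_mul, Finset.sum_add_distrib, hdiagSum] at hsum
  linarith [sum_sum_mul_nonneg_of_posSemidef hM hB]

lemma schrijverTheta_le_of_certificate {V : Type*} [Fintype V] [Nonempty V]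
    (G : SimpleGraph V) (M : Matrix V V ℝ) (t : ℝ) (hM : M.PosSemidef)
    (hdiag : ∀ i, M i i ≤ t - 1) (hoff : ∀ i j, i ≠ j → ¬ G.Adj i j → M i j ≤ -1) :
    schrijverTheta G ≤ t := by
  inhabit V
  -- `Real.sSup_le` needs `0 ≤ t`, as `sSup ∅ = 0`; it follows from `0 ≤ M i i` at any vertex.
  refine Real.sSup_le ?_ (by linarith [hdiag default, hM.diag_nonneg (i := default)])
  rintro _ ⟨B, hB, htr, hadj, hnonneg, rfl⟩
  exact sum_le_of_schrijver_certificate G M t hM hdiag hoff B hB htr hadj hnonneg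

instance {α β : Type*} [DecidableEq α] [DecidableEq β] (G : SimpleGraph α) (H : SimpleGraph β)
    [DecidableRel G.Adj] [DecidableRel H.Adj] : DecidableRel (strongProd G H).Adj :=
  fun x y => inferInstanceAs (Decidable (x ≠ y ∧
    (x.1 = y.1 ∨ G.Adj x.1 y.1) ∧ (x.2 = y.2 ∨ H.Adj x.2 y.2)))

instance : DecidableRel hamGraph.Adj :=
  fun x y => inferInstanceAs (Decidable (hammingDist x y = 1 ∨ hammingDist x y = 2))

def boolSign (b : Bool) : ℤ := if b then -1 else 1

def hamFeature (x : Fin 5 → Bool) : Option (Fin 5) → ℤ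
  | none => ∏ i, boolSign (x i)
  | some i => boolSign (x i)

def hamGram (x y : Fin 5 → Bool) : ℤ := ∑ o, hamFeature x o * hamFeature y o

lemma hamGram_self : ∀ x, hamGram x x = 6 := by decide

lemma hamGram_le_of_not_adj : ∀ x y, x ≠ y → ¬ hamGraph.Adj x y → hamGram x y ≤ -2 := by decide

lemma posSemidef_hamGram_div_two :
    (Matrix.of fun x y => (hamGram x y : ℝ) / 2).PosSemidef := by
  let A : Matrix (Option (Fin 5)) (Fin 5 → Bool) ℝ := Matrix.of fun o x => hamFeature x o
  have hgram : (Matrix.of fun x y => (hamGram x y : ℝ) / 2) = (1 / 2 : ℝ) • (Aᴴ * A) := by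
    ext x y
    simp [A, hamGram, mul_apply, div_eq_inv_mul]
  rw [hgram]
  exact (posSemidef_conjTranspose_mul_self A).smul (by norm_num)

lemma schrijverTheta_hamGraph_le_four : schrijverTheta hamGraph ≤ 4 := by
  refine schrijverTheta_le_of_certificate hamGraph _ 4 posSemidef_hamGram_div_two
    (fun x => ?_) (fun x y hxy hG => ?_)
  · simp only [of_apply, hamGram_self]
    norm_num
  · have h : (hamGram x y : ℝ) ≤ -2 := by exact_mod_cast hamGram_le_of_not_adj x y hxy hG
    simp only [of_apply]
    linarith

def indepSet20 : Finset ((Fin 5 → Bool) × (Fin 5 → Bool)) :=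
  [(![true,true,false,false,false], ![true,false,true,false,false]),
   (![true,false,true,false,false], ![true,false,false,true,true]),
   (![false,true,true,false,false], ![false,true,false,true,false]),
   (![true,true,true,false,false], ![false,true,true,false,true]),
   (![true,false,false,true,false], ![false,true,true,true,false]),
   (![false,true,false,true,false], ![true,true,false,false,true]),
   (![true,true,false,true,false], ![false,false,false,true,true]),
   (![false,false,true,true,false], ![false,false,true,false,true]),
   (![true,false,true,true,false], ![true,true,false,false,false]),
   (![false,true,true,true,false], ![true,false,true,true,false]),
   (![true,false,false,false,true], ![false,true,false,false,true]),
   (![false,true,false,false,true], ![false,false,true,true,true]),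
   (![true,true,false,false,true], ![true,true,false,true,false]),
   (![false,false,true,false,true], ![true,true,true,false,false]),
   (![true,false,true,false,true], ![false,false,true,true,false]),
   (![false,true,true,false,true], ![true,false,false,false,true]),
   (![false,false,false,true,true], ![true,false,false,true,false]),
   (![true,false,false,true,true], ![true,false,true,false,true]),
   (![false,true,false,true,true], ![false,true,true,false,false]),
   (![false,false,true,true,true], ![false,true,false,true,true])].toFinset

lemma card_indepSet20 : indepSet20.card = 20 := by decide

lemma isIndepSet_indepSet20 :
    (strongProd hamGraph hamGraph).IsIndepSet (indepSet20 : Set _) := by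
  decide

lemma twenty_le_indepNum_strongProd_hamGraph : 20 ≤ indepNum (strongProd hamGraph hamGraph) :=
  card_indepSet20 ▸ card_le_indepNum_of_isIndepSet isIndepSet_indepSet20

theorem stmt19 :
    schrijverTheta hamGraph ≤ 4 ∧
    20 ≤ indepNum (strongProd hamGraph hamGraph) ∧
    Real.sqrt 20 ≤ shannonCapacity hamGraph ∧
    schrijverTheta hamGraph < Real.sqrt 20 := by
  have hθ := schrijverTheta_hamGraph_le_four
  have hα := twenty_le_indepNum_strongProd_hamGraph
  have hΘ : √20 ≤ shannonCapacity hamGraph :=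
    calc √20 ≤ √(indepNum (strongProd hamGraph hamGraph) : ℝ) :=
          Real.sqrt_le_sqrt (by exact_mod_cast hα)
      _ ≤ shannonCapacity hamGraph := sqrt_indepNum_strongProd_le_shannonCapacity hamGraph
  have h4 : (4 : ℝ) < √20 := by rw [Real.lt_sqrt] <;> norm_num
  exact ⟨hθ, hα, hΘ, hθ.trans_lt h4⟩
end
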